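/- Let C be a preorder, J a coverage on C, and L a frame. A monotone map f : C → L is called J-filtering if it is filtering and for every c ∈ C and every covering family S ∈ J(c), f(c) = ⋁_{d∈S} f(d). Then f : C → L is J-filtering if and only if there exists a (necessarily unique) frame homomorphism g : Id_J(C) → L with g ∘ η = f, where η : C → Id_J(C) sends c to the principal J-ideal (c)↓_J; moreover g is given by g(I) = ⋁_{c∈I} f(c). -/
import Mathlib


/-- A `J`-ideal on a preorder `C` equipped with a coverage `J`. -/
def IsJIdeal {C : Type*} [Preorder C] (J : C → Set (Set C)) (I : Set C) : Prop :=
  (∀ a ∈ I, ∀ b, b ≤ a → b ∈ I) ∧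
  ∀ c, ∀ S ∈ J c, (∀ d ∈ S, d ∈ I) → c ∈ I

/-- The `J`-closure of a subset: the smallest `J`-ideal containing it. -/
def JClosure {C : Type*} [Preorder C] (J : C → Set (Set C)) (X : Set C) : Set C :=
  ⋂₀ {I | IsJIdeal J I ∧ X ⊆ I}

/-- `f : C → L` is `J`-filtering: filtering, and sends `J`-covering families to
joins. -/
def JFiltering {C L : Type*} [Preorder C] [Order.Frame L]
    (J : C → Set (Set C)) (f : C → L) : Prop :=
  (⨆ c : C, f c) = ⊤ ∧
  (∀ c c' : C, f c ⊓ f c' = ⨆ b ∈ {b : C | b ≤ c ∧ b ≤ c'}, f b) ∧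
  (∀ c, ∀ S ∈ J c, f c = ⨆ d ∈ S, f d)

/-- `g` is a frame homomorphism `Id_J(C) → L` whose composite with
`η : c ↦ (c)↓_J` is `f`: it preserves the top ideal, binary meets (intersections)
and arbitrary joins (`J`-closures of unions) of `J`-ideals. -/
def IsFrameHomOver {C L : Type*} [Preorder C] [Order.Frame L]
    (J : C → Set (Set C)) (f : C → L) (g : Set C → L) : Prop :=
  g Set.univ = ⊤ ∧
  (∀ I₁ I₂, IsJIdeal J I₁ → IsJIdeal J I₂ → g (I₁ ∩ I₂) = g I₁ ⊓ g I₂) ∧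
  (∀ K : Set (Set C), (∀ I ∈ K, IsJIdeal J I) →
    g (JClosure J (⋃₀ K)) = ⨆ I ∈ K, g I) ∧
  (∀ c, g (JClosure J {c}) = f c)

section Aux
variable {C : Type*} [Preorder C] {J : C → Set (Set C)}

lemma isJIdeal_univ : IsJIdeal J (Set.univ : Set C) :=
  ⟨fun _ _ _ _ => trivial, fun _ _ _ _ => trivial⟩

lemma mem_JClosure_iff {X : Set C} {x : C} :
    x ∈ JClosure J X ↔ ∀ I, IsJIdeal J I → X ⊆ I → x ∈ I := by
  simp only [JClosure, Set.mem_sInter, Set.mem_setOf_eq, and_imp]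

lemma subset_JClosure (X : Set C) : X ⊆ JClosure J X :=
  fun _ hx => mem_JClosure_iff.2 fun _ _ hX => hX hx

lemma JClosure_min {X I : Set C} (hI : IsJIdeal J I) (hX : X ⊆ I) :
    JClosure J X ⊆ I :=
  fun _ hx => mem_JClosure_iff.1 hx I hI hX

lemma isJIdeal_JClosure (X : Set C) : IsJIdeal J (JClosure J X) := by
  constructor
  · intro a ha b hb
    exact mem_JClosure_iff.2 fun I hI hX => hI.1 a (mem_JClosure_iff.1 ha I hI hX) b hb
  · intro c S hS hd
    exact mem_JClosure_iff.2 fun I hI hX =>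
      hI.2 c S hS (fun d hdS => mem_JClosure_iff.1 (hd d hdS) I hI hX)

lemma JClosure_of_isJIdeal {I : Set C} (hI : IsJIdeal J I) : JClosure J I = I :=
  le_antisymm (JClosure_min hI le_rfl) (subset_JClosure I)

lemma self_mem_eta (c : C) : c ∈ JClosure J {c} := subset_JClosure _ rfl

lemma mem_eta_of_le {b c : C} (h : b ≤ c) : b ∈ JClosure J {c} :=
  (isJIdeal_JClosure {c}).1 c (self_mem_eta c) b h

lemma eta_subset {c : C} {I : Set C} (hI : IsJIdeal J I) (hc : c ∈ I) :
    JClosure J {c} ⊆ I :=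
  JClosure_min hI (Set.singleton_subset_iff.2 hc)

lemma eta_inter_eta
    (hstab : ∀ c, ∀ S ∈ J c, ∀ c', c' ≤ c → {d | d ∈ S ∧ d ≤ c'} ∈ J c') (c c' : C) :
    JClosure J {c} ∩ JClosure J {c'} = JClosure J {b : C | b ≤ c ∧ b ≤ c'} := by
  set E := JClosure J {b : C | b ≤ c ∧ b ≤ c'} with hE
  apply le_antisymm
  · have claim1 : ∀ a ∈ JClosure J {c}, a ≤ c' → a ∈ E := by
      have hM : IsJIdeal J {a : C | ∀ e, e ≤ a → e ≤ c' → e ∈ E} := by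
        constructor
        · intro a ha b hb e he hec'
          exact ha e (he.trans hb) hec'
        · intro a S hS hd e hea hec'
          refine (isJIdeal_JClosure _).2 e {d | d ∈ S ∧ d ≤ e} (hstab a S hS e hea) ?_
          rintro d ⟨hdS, hde⟩
          exact hd d hdS d le_rfl (hde.trans hec')
      have hc : c ∈ {a : C | ∀ e, e ≤ a → e ≤ c' → e ∈ E} := by
        intro e hec hec'
        exact subset_JClosure _ ⟨hec, hec'⟩
      intro a ha hac'
      exact eta_subset hM hc ha a le_rfl hac'
    have hM2 : IsJIdeal J {e : C | ∀ b, b ≤ e → b ∈ JClosure J {c} → b ∈ E} := by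
      constructor
      · intro a ha b hb e he hec
        exact ha e (he.trans hb) hec
      · intro a S hS hd b hba hbc
        refine (isJIdeal_JClosure _).2 b {d | d ∈ S ∧ d ≤ b} (hstab a S hS b hba) ?_
        rintro d ⟨hdS, hdb⟩
        exact hd d hdS d le_rfl ((isJIdeal_JClosure {c}).1 b hbc d hdb)
    have hc' : c' ∈ {e : C | ∀ b, b ≤ e → b ∈ JClosure J {c} → b ∈ E} := by
      intro b hbc' hbc
      exact claim1 b hbc hbc'
    rintro a ⟨hac, hac'⟩
    exact eta_subset hM2 hc' hac' a le_rfl hac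
  · refine JClosure_min ⟨?_, ?_⟩ ?_
    · rintro a ⟨ha, ha'⟩ b hb
      exact ⟨(isJIdeal_JClosure _).1 a ha b hb, (isJIdeal_JClosure _).1 a ha' b hb⟩
    · intro d S hS hdd
      exact ⟨(isJIdeal_JClosure _).2 d S hS fun e he => (hdd e he).1,
             (isJIdeal_JClosure _).2 d S hS fun e he => (hdd e he).2⟩
    · rintro b ⟨hbc, hbc'⟩
      exact ⟨mem_eta_of_le hbc, mem_eta_of_le hbc'⟩

/-- Closure of a set equals the closure of the union of the principal ideals of
its elements. -/
lemma JClosure_sUnion_eta (X : Set C) :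
    JClosure J (⋃₀ ((fun c => JClosure J {c}) '' X)) = JClosure J X := by
  apply le_antisymm
  · refine JClosure_min (isJIdeal_JClosure _) ?_
    rintro x ⟨_, ⟨c, hc, rfl⟩, hx⟩
    exact eta_subset (isJIdeal_JClosure _) (subset_JClosure X hc) hx
  · refine JClosure_min (isJIdeal_JClosure _) fun x hx => ?_
    exact subset_JClosure _ ⟨_, ⟨x, hx, rfl⟩, self_mem_eta x⟩

lemma JClosure_cover (hsub : ∀ c, ∀ S ∈ J c, ∀ d ∈ S, d ≤ c)
    {c : C} {S : Set C} (hS : S ∈ J c) :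
    JClosure J S = JClosure J {c} := by
  apply le_antisymm
  · exact JClosure_min (isJIdeal_JClosure _) fun d hd =>
      mem_eta_of_le (hsub c S hS d hd)
  · refine JClosure_min (isJIdeal_JClosure _) (Set.singleton_subset_iff.2 ?_)
    exact (isJIdeal_JClosure _).2 c S hS fun d hdS => subset_JClosure _ hdS

end Aux

/-- A monotone map `f : C → L` to a frame is `J`-filtering iff there exists a
(necessarily unique on `J`-ideals) frame homomorphism `g : Id_J(C) → L` with
`g ∘ η = f`; moreover any such `g` is given by `g I = ⨆ c ∈ I, f c`. -/


theorem statement_6 {C L : Type*} [Preorder C] [Order.Frame L]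
    (J : C → Set (Set C))
    (hsub : ∀ c, ∀ S ∈ J c, ∀ d ∈ S, d ≤ c)
    (hstab : ∀ c, ∀ S ∈ J c, ∀ c', c' ≤ c → {d | d ∈ S ∧ d ≤ c'} ∈ J c')
    (f : C → L) (hf : Monotone f) :
    (JFiltering J f ↔ ∃ g : Set C → L, IsFrameHomOver J f g) ∧
    (∀ g₁ g₂ : Set C → L, IsFrameHomOver J f g₁ → IsFrameHomOver J f g₂ →
      ∀ I, IsJIdeal J I → g₁ I = g₂ I) ∧
    (∀ g : Set C → L, IsFrameHomOver J f g →
      ∀ I, IsJIdeal J I → g I = ⨆ c ∈ I, f c) := by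
  -- the value of any frame hom over f on any J-closure
  have gX : ∀ g : Set C → L, IsFrameHomOver J f g → ∀ X : Set C,
      g (JClosure J X) = ⨆ c ∈ X, f c := by
    intro g hg X
    obtain ⟨-, -, hjoin, heta⟩ := hg
    have hK : ∀ I ∈ (fun c => JClosure J {c}) '' X, IsJIdeal J I := by
      rintro _ ⟨c, -, rfl⟩; exact isJIdeal_JClosure _
    rw [← JClosure_sUnion_eta X, hjoin _ hK, iSup_image]
    exact iSup_congr fun c => iSup_congr fun _ => heta c
  have formula : ∀ g : Set C → L, IsFrameHomOver J f g →
      ∀ I, IsJIdeal J I → g I = ⨆ c ∈ I, f c := by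
    intro g hg I hI
    rw [← JClosure_of_isJIdeal hI, gX g hg, JClosure_of_isJIdeal hI]
  refine ⟨⟨?_, ?_⟩, fun g₁ g₂ h₁ h₂ I hI => (formula g₁ h₁ I hI).trans
      (formula g₂ h₂ I hI).symm, formula⟩
  · -- forward: filtering → existence of g
    rintro ⟨htop, hmeet, hcov⟩
    -- {c | f c ≤ u} is a J-ideal for any u
    have hMu : ∀ u : L, IsJIdeal J {c : C | f c ≤ u} := by
      intro u
      constructor
      · intro a ha b hb
        exact (hf hb).trans ha
      · intro c S hS hd
        rw [Set.mem_setOf_eq, hcov c S hS]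
        exact iSup₂_le hd
    refine ⟨fun I => ⨆ c ∈ I, f c, ?_, ?_, ?_, ?_⟩
    · show (⨆ c ∈ (Set.univ : Set C), f c) = ⊤
      rw [iSup_univ]; exact htop
    · intro I₁ I₂ h₁ h₂
      show (⨆ c ∈ I₁ ∩ I₂, f c) = (⨆ c ∈ I₁, f c) ⊓ ⨆ c ∈ I₂, f c
      apply le_antisymm
      · refine iSup₂_le fun c hc => le_inf ?_ ?_
        · exact le_iSup₂_of_le c hc.1 le_rfl
        · exact le_iSup₂_of_le c hc.2 le_rfl
      · rw [iSup_inf_eq]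
        refine iSup_le fun c => ?_
        rw [iSup_inf_eq]
        refine iSup_le fun hc => ?_
        rw [inf_iSup_eq]
        refine iSup_le fun c' => ?_
        rw [inf_iSup_eq]
        refine iSup_le fun hc' => ?_
        rw [hmeet c c']
        refine iSup₂_le fun b hb => ?_
        exact le_iSup₂_of_le b ⟨h₁.1 c hc b hb.1, h₂.1 c' hc' b hb.2⟩ le_rfl
    · intro K hK
      show (⨆ c ∈ JClosure J (⋃₀ K), f c) = ⨆ I ∈ K, ⨆ c ∈ I, f c
      apply le_antisymm
      · refine iSup₂_le fun c hc => ?_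
        have : c ∈ {c : C | f c ≤ ⨆ I ∈ K, ⨆ c ∈ I, f c} := by
          refine JClosure_min (hMu _) ?_ hc
          rintro x ⟨I, hIK, hxI⟩
          exact le_iSup₂_of_le I hIK (le_iSup₂_of_le x hxI le_rfl)
        exact this
      · refine iSup₂_le fun I hIK => iSup₂_le fun c hc => ?_
        exact le_iSup₂_of_le c (subset_JClosure _ ⟨I, hIK, hc⟩) le_rfl
    · intro c
      show (⨆ d ∈ JClosure J {c}, f d) = f c
      apply le_antisymm
      · refine iSup₂_le fun d hd => ?_
        exact eta_subset (hMu (f c)) (le_refl (f c)) hd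
      · exact le_iSup₂_of_le c (self_mem_eta c) le_rfl
  · -- backward: existence of g → filtering
    rintro ⟨g, hg⟩
    refine ⟨?_, ?_, ?_⟩
    · have := formula g hg Set.univ isJIdeal_univ
      rw [hg.1, iSup_univ] at this
      exact this.symm
    · intro c c'
      have h1 : f c ⊓ f c' = g (JClosure J {c} ∩ JClosure J {c'}) := by
        rw [hg.2.1 _ _ (isJIdeal_JClosure _) (isJIdeal_JClosure _), hg.2.2.2 c,
          hg.2.2.2 c']
      rw [h1, eta_inter_eta hstab c c', gX g hg]
    · intro c S hS
      rw [← hg.2.2.2 c, ← JClosure_cover hsub hS, gX g hg]
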